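/- arXiv:1306.1582 — 5 statements merged into one kernel-verified Lean document; each statement's English description precedes it below -/
import Mathlib

section
/- On the Hilbert space L²([0,1]), the operators s_i = (1/√β) T_{g_i}* (where (T_{g_i}ξ)(x) = ξ(g_i(x)), with T_{g_{N-1}} supported on [0,β_1]) are partial isometries satisfying: s_i* s_i = 1 for i = 0,...,N-2; s_{N-1}* s_{N-1} = χ_{[0,β_1]}; s_i s_i* = χ_{[i/β,(i+1)/β)} for i = 0,...,N-2; s_{N-1} s_{N-1}* = χ_{[(N-1)/β,1)}; and Σ_{i=0}^{N-1} s_i s_i* = 1. -/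
open MeasureTheory
open scoped Classical

/-- The β-transformation `f_β(x) = βx - ⌊βx⌋`. -/
noncomputable def betaMap (β x : ℝ) : ℝ := β * x - ⌊β * x⌋

/-- `β₁ = β - ξ₁` where `ξ₁ = ⌈β⌉ - 1 = N - 1`. -/
noncomputable def betaOne (β : ℝ) : ℝ := β - ((⌈β⌉₊ : ℝ) - 1)

/-- The affine branch `g_j(x) = (x+j)/β` of the inverse of `f_β`. -/
noncomputable def gBranch (β : ℝ) (j : ℕ) (x : ℝ) : ℝ := (x + j) / β

/-- The domain of the branch `g_j`: `[0,1]` for `j ≤ N-2` and `[0,β₁]` for `j = N-1`. -/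
noncomputable def sDom (β : ℝ) (j : ℕ) : Set ℝ :=
  if j = ⌈β⌉₊ - 1 then Set.Icc 0 (betaOne β) else Set.Icc 0 1

/-- The (essential) range interval of `g_j` on its domain:
`[j/β, (j+1)/β)` for `j ≤ N-2` and `[(N-1)/β, 1)` for `j = N-1`. -/
noncomputable def sRange (β : ℝ) (j : ℕ) : Set ℝ :=
  Set.Ico ((j : ℝ) / β) (min (((j : ℝ) + 1) / β) 1)

/-- The composition operator `T_{g_j}`, `(T_{g_j}ξ)(x) = ξ(g_j(x))` on the domain of
`g_j` and `0` outside it. -/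
noncomputable def Tg (β : ℝ) (j : ℕ) (ξ : ℝ → ℂ) : ℝ → ℂ :=
  fun x => if x ∈ sDom β j then ξ (gBranch β j x) else 0

/-- The composition operator `T_{f_β}`, `(T_{f_β}ξ)(x) = ξ(f_β(x))` on `[0,1]`. -/
noncomputable def Tf (β : ℝ) (ξ : ℝ → ℂ) : ℝ → ℂ :=
  fun x => if x ∈ Set.Icc (0 : ℝ) 1 then ξ (betaMap β x) else 0

/-- The partial isometry `s_j = (1/√β) T_{g_j}^*` on `L²([0,1])`, realized concretely:
`(s_jξ)(x) = √β · ξ(f_β(x))` for `x` in the range interval of `g_j`, and `0` elsewhere. -/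
noncomputable def sOp (β : ℝ) (j : ℕ) (ξ : ℝ → ℂ) : ℝ → ℂ :=
  fun x => if x ∈ sRange β j then (Real.sqrt β : ℂ) * ξ (betaMap β x) else 0

/-- The adjoint `s_j^* = (1/√β) T_{g_j}`, realized concretely:
`(s_j^*ξ)(x) = (1/√β) · ξ(g_j(x))` on the domain of `g_j`, and `0` elsewhere. -/
noncomputable def sStarOp (β : ℝ) (j : ℕ) (ξ : ℝ → ℂ) : ℝ → ℂ :=
  fun x => if x ∈ sDom β j then ((Real.sqrt β : ℂ))⁻¹ * ξ (gBranch β j x) else 0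

lemma hβ0 {β : ℝ} (hβ : 1 < β) : (0:ℝ) < β := lt_trans one_pos hβ
lemma hN2 {β : ℝ} (hβ : 1 < β) : 2 ≤ ⌈β⌉₊ := by
  have := Nat.lt_ceil.mpr (by exact_mod_cast hβ : ((1:ℕ):ℝ) < β); omega
lemma hβleN (β : ℝ) : β ≤ (⌈β⌉₊ : ℝ) := Nat.le_ceil β
lemma hNlt {β : ℝ} (hβ : 1 < β) : (⌈β⌉₊ : ℝ) - 1 < β := by
  have := Nat.ceil_lt_add_one (le_of_lt (hβ0 hβ))
  linarith
lemma hb1pos {β : ℝ} (hβ : 1 < β) : 0 < betaOne β := by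
  have := hNlt hβ; unfold betaOne; linarith
lemma hb1le1 {β : ℝ} (hβ : 1 < β) : betaOne β ≤ 1 := by
  have h1 := hβleN β
  have h2 := hN2 hβ
  have : (2:ℝ) ≤ (⌈β⌉₊:ℝ) := by exact_mod_cast h2
  unfold betaOne; linarith
lemma sqrt_ne {β : ℝ} (hβ : 1 < β) : ((Real.sqrt β : ℝ) : ℂ) ≠ 0 := by
  have : Real.sqrt β ≠ 0 := by
    have := hβ0 hβ; positivity
  exact_mod_cast this

/-- Key lemma: s_j s_j^* is multiplication by the indicator of sRange. -/
lemma lemA {β : ℝ} (hβ : 1 < β) (j : ℕ) (ξ : ℝ → ℂ) (x : ℝ) :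
    sOp β j (sStarOp β j ξ) x = if x ∈ sRange β j then ξ x else 0 := by
  have hb0 : (0:ℝ) < β := hβ0 hβ
  unfold sOp
  split_ifs with hx
  · obtain ⟨hx1, hx2⟩ := hx
    have hx2' : x < ((j:ℝ) + 1) / β := lt_of_lt_of_le hx2 (min_le_left _ _)
    have hx2'' : x < 1 := lt_of_lt_of_le hx2 (min_le_right _ _)
    have hge : (j:ℝ) ≤ β * x := by
      rw [div_le_iff₀ hb0] at hx1; linarith [hx1]
    have hlt : β * x < (j:ℝ) + 1 := by
      rw [lt_div_iff₀ hb0] at hx2'; linarith [hx2']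
    have hfl : ⌊β * x⌋ = (j : ℤ) := by
      rw [Int.floor_eq_iff]; constructor <;> [exact_mod_cast hge; exact_mod_cast hlt]
    have hbm : betaMap β x = β * x - j := by unfold betaMap; rw [hfl]; norm_num
    have hdom : betaMap β x ∈ sDom β j := by
      rw [hbm]; unfold sDom
      split_ifs with hjN
      · constructor
        · linarith
        · have hcast : (j:ℝ) = (⌈β⌉₊:ℝ) - 1 := by
            subst hjN
            have h2 := hN2 hβ
            push_cast [Nat.cast_sub (by omega : 1 ≤ ⌈β⌉₊)]
            ring
          have hlt' : β * x < β := by nlinarith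
          rw [hcast] at hge
          unfold betaOne; linarith
      · constructor <;> nlinarith
    unfold sStarOp
    rw [if_pos hdom]
    have hg : gBranch β j (betaMap β x) = x := by
      rw [hbm]; unfold gBranch; field_simp; ring
    rw [hg, ← mul_assoc, mul_inv_cancel₀ (sqrt_ne hβ), one_mul]
  · rfl

/-- Key lemma: s_j^* s_j is the identity on the interior of sDom. -/
lemma lemB {β : ℝ} (hβ : 1 < β) (j : ℕ) (ξ : ℝ → ℂ) (x : ℝ)
    (h0 : 0 ≤ x) (h1 : x < 1) (hβx : x + j < β) (hdom : x ∈ sDom β j) :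
    sStarOp β j (sOp β j ξ) x = ξ x := by
  have hb0 : (0:ℝ) < β := hβ0 hβ
  unfold sStarOp
  rw [if_pos hdom]
  unfold sOp
  have hy : gBranch β j x ∈ sRange β j := by
    refine ⟨?_, lt_min ?_ ?_⟩
    · unfold gBranch
      rw [div_le_div_iff₀ hb0 hb0]; nlinarith
    · unfold gBranch
      rw [div_lt_div_iff₀ hb0 hb0]; nlinarith
    · unfold gBranch
      rw [div_lt_one hb0]; linarith
  rw [if_pos hy]
  have hbm : betaMap β (gBranch β j x) = x := by
    unfold betaMap gBranch
    have h1' : β * ((x + j) / β) = x + j := by field_simp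
    rw [h1']
    have hfl : ⌊x + (j:ℝ)⌋ = (j:ℤ) := by
      rw [show ((j:ℝ)) = ((j:ℤ):ℝ) by push_cast; ring, Int.floor_add_intCast,
        Int.floor_eq_zero_iff.mpr ⟨h0, h1⟩]
      ring
    rw [hfl]; push_cast; ring
  rw [hbm, ← mul_assoc, inv_mul_cancel₀ (sqrt_ne hβ), one_mul]

lemma ae_ne {β : ℝ} (c : ℝ) :
    ∀ᵐ x ∂(volume.restrict (Set.Icc (0:ℝ) 1)), x ≠ c := by
  refine ae_restrict_of_ae ?_
  simp only [ae_iff, not_not]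
  rw [show {x : ℝ | x = c} = {c} from Set.setOf_eq_eq_singleton]
  exact measure_singleton c

lemma conj2 {β : ℝ} (hβ : 1 < β) (j : ℕ) (hj : j ≤ ⌈β⌉₊ - 2) (ξ : ℝ → ℂ) :
    ∀ᵐ x ∂(volume.restrict (Set.Icc (0:ℝ) 1)), sStarOp β j (sOp β j ξ) x = ξ x := by
  have hmem : ∀ᵐ x ∂(volume.restrict (Set.Icc (0:ℝ) 1)), x ∈ Set.Icc (0:ℝ) 1 :=
    ae_restrict_mem measurableSet_Icc
  filter_upwards [hmem, ae_ne (β := β) 1] with x hx hxne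
  have hN := hN2 hβ
  have hjne : j ≠ ⌈β⌉₊ - 1 := by omega
  have hdom : x ∈ sDom β j := by unfold sDom; rw [if_neg hjne]; exact hx
  have h1 : x < 1 := lt_of_le_of_ne hx.2 hxne
  apply lemB hβ j ξ x hx.1 h1 ?_ hdom
  have hj' : j + 2 ≤ ⌈β⌉₊ := by omega
  have hcast : (j:ℝ) + 2 ≤ (⌈β⌉₊:ℝ) := by exact_mod_cast hj'
  have := hNlt hβ
  linarith

lemma conj3 {β : ℝ} (hβ : 1 < β) (ξ : ℝ → ℂ) :
    ∀ᵐ x ∂(volume.restrict (Set.Icc (0:ℝ) 1)),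
      sStarOp β (⌈β⌉₊ - 1) (sOp β (⌈β⌉₊ - 1) ξ) x =
        Set.indicator (Set.Icc (0:ℝ) (betaOne β)) ξ x := by
  have hmem : ∀ᵐ x ∂(volume.restrict (Set.Icc (0:ℝ) 1)), x ∈ Set.Icc (0:ℝ) 1 :=
    ae_restrict_mem measurableSet_Icc
  filter_upwards [hmem, ae_ne (β := β) (betaOne β)] with x hx hxne
  have hN := hN2 hβ
  by_cases hxb : x ∈ Set.Icc 0 (betaOne β)
  · rw [Set.indicator_of_mem hxb]
    have hdom : x ∈ sDom β (⌈β⌉₊ - 1) := by unfold sDom; rw [if_pos rfl]; exact hxb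
    have hlt : x < betaOne β := lt_of_le_of_ne hxb.2 hxne
    apply lemB hβ _ ξ x hxb.1 (lt_of_lt_of_le hlt (hb1le1 hβ)) ?_ hdom
    have hcast : ((⌈β⌉₊ - 1 : ℕ):ℝ) = (⌈β⌉₊:ℝ) - 1 := by
      push_cast [Nat.cast_sub (by omega : 1 ≤ ⌈β⌉₊)]; ring
    rw [hcast]; unfold betaOne at hlt; linarith
  · rw [Set.indicator_of_notMem hxb]
    unfold sStarOp
    rw [if_neg]
    unfold sDom
    rw [if_pos rfl]; exact hxb

lemma conj4 {β : ℝ} (hβ : 1 < β) (j : ℕ) (hj : j ≤ ⌈β⌉₊ - 2) (ξ : ℝ → ℂ) (x : ℝ) :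
    sOp β j (sStarOp β j ξ) x =
      Set.indicator (Set.Ico ((j : ℝ) / β) (((j : ℝ) + 1) / β)) ξ x := by
  have hb0 := hβ0 hβ
  have hN := hN2 hβ
  have hrange : sRange β j = Set.Ico ((j:ℝ)/β) (((j:ℝ)+1)/β) := by
    unfold sRange
    rw [min_eq_left]
    rw [div_le_one hb0]
    have hj' : j + 2 ≤ ⌈β⌉₊ := by omega
    have hcast : (j:ℝ) + 2 ≤ (⌈β⌉₊:ℝ) := by exact_mod_cast hj'
    have := hNlt hβ
    linarith
  rw [lemA hβ j ξ x, hrange]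
  by_cases h : x ∈ Set.Ico ((j:ℝ)/β) (((j:ℝ)+1)/β) <;> simp [h]

lemma conj5 {β : ℝ} (hβ : 1 < β) (ξ : ℝ → ℂ) (x : ℝ) :
    sOp β (⌈β⌉₊ - 1) (sStarOp β (⌈β⌉₊ - 1) ξ) x =
      Set.indicator (Set.Ico (((⌈β⌉₊ : ℝ) - 1) / β) 1) ξ x := by
  have hb0 := hβ0 hβ
  have hN := hN2 hβ
  have hcast : ((⌈β⌉₊ - 1 : ℕ):ℝ) = (⌈β⌉₊:ℝ) - 1 := by
    push_cast [Nat.cast_sub (by omega : 1 ≤ ⌈β⌉₊)]; ring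
  have hrange : sRange β (⌈β⌉₊ - 1) = Set.Ico (((⌈β⌉₊:ℝ) - 1)/β) 1 := by
    unfold sRange
    rw [hcast, min_eq_right]
    rw [le_div_iff₀ hb0, one_mul]
    have := hβleN β
    linarith
  rw [lemA hβ _ ξ x, hrange]
  by_cases h : x ∈ Set.Ico (((⌈β⌉₊:ℝ) - 1)/β) 1 <;> simp [h]

lemma conj6 {β : ℝ} (hβ : 1 < β) (ξ : ℝ → ℂ) :
    ∀ᵐ x ∂(volume.restrict (Set.Icc (0:ℝ) 1)),
      ∑ j ∈ Finset.range ⌈β⌉₊, sOp β j (sStarOp β j ξ) x = ξ x := by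
  have hmem : ∀ᵐ x ∂(volume.restrict (Set.Icc (0:ℝ) 1)), x ∈ Set.Icc (0:ℝ) 1 :=
    ae_restrict_mem measurableSet_Icc
  filter_upwards [hmem, ae_ne (β := β) 1] with x hx hxne
  have hb0 := hβ0 hβ
  have h0 : 0 ≤ x := hx.1
  have h1 : x < 1 := lt_of_le_of_ne hx.2 hxne
  have hβx0 : 0 ≤ β * x := by positivity
  have hβx1 : β * x < β := by nlinarith
  set j₀ := ⌊β * x⌋.toNat with hj₀
  have hfl0 : (0:ℤ) ≤ ⌊β * x⌋ := Int.floor_nonneg.mpr hβx0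
  have hcast : (j₀:ℝ) = ((⌊β * x⌋ : ℤ) : ℝ) := by
    rw [hj₀]; exact_mod_cast Int.toNat_of_nonneg hfl0
  have hle : (j₀:ℝ) ≤ β * x := by rw [hcast]; exact Int.floor_le _
  have hlt1 : β * x < (j₀:ℝ) + 1 := by
    rw [hcast]; exact Int.lt_floor_add_one _
  have hj₀N : j₀ < ⌈β⌉₊ := by
    by_contra h
    push_neg at h
    have h' : (⌈β⌉₊:ℝ) ≤ (j₀:ℝ) := by exact_mod_cast h
    have := hβleN β
    linarith
  rw [Finset.sum_eq_single_of_mem j₀ (Finset.mem_range.mpr hj₀N) ?side]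
  · rw [lemA hβ, if_pos]
    refine ⟨(div_le_iff₀ hb0).mpr (by linarith), lt_min ((lt_div_iff₀ hb0).mpr (by linarith)) h1⟩
  case side =>
    intro b _ hbne
    rw [lemA hβ, if_neg]
    rintro ⟨hb1, hb2⟩
    have hb2' : x < ((b:ℝ) + 1) / β := lt_of_lt_of_le hb2 (min_le_left _ _)
    have h1' : (b:ℝ) ≤ β * x := by rw [div_le_iff₀ hb0] at hb1; linarith
    have h2' : β * x < (b:ℝ) + 1 := by rw [lt_div_iff₀ hb0] at hb2'; linarith
    have hfb : ⌊β * x⌋ = (b:ℤ) := by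
      rw [Int.floor_eq_iff]
      constructor <;> [exact_mod_cast h1'; exact_mod_cast h2']
    apply hbne
    rw [hj₀, hfb]
    simp

lemma conj1 {β : ℝ} (hβ : 1 < β) (j : ℕ) (hj : j < ⌈β⌉₊) (ξ η : ℝ → ℂ)
    (hξ : Continuous ξ) (hη : Continuous η) :
    ∫ x in Set.Icc (0:ℝ) 1, (starRingEnd ℂ) (Tg β j ξ x) * η x =
      ∫ x in Set.Icc (0:ℝ) 1, (starRingEnd ℂ) (ξ x) * ((Real.sqrt β : ℂ) * sOp β j η x) := by
  have hb0 := hβ0 hβ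
  have hN := hN2 hβ
  have hbne : (β:ℂ) ≠ 0 := by exact_mod_cast hb0.ne'
  set c : ℝ := if j = ⌈β⌉₊ - 1 then betaOne β else 1 with hc
  have hcastN : ((⌈β⌉₊ - 1 : ℕ):ℝ) = (⌈β⌉₊:ℝ) - 1 := by
    push_cast [Nat.cast_sub (by omega : 1 ≤ ⌈β⌉₊)]; ring
  have hc0 : 0 < c := by rw [hc]; split_ifs; exacts [hb1pos hβ, one_pos]
  have hc1 : c ≤ 1 := by rw [hc]; split_ifs; exacts [hb1le1 hβ, le_refl 1]
  have hdom_eq : sDom β j = Set.Icc 0 c := by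
    rw [hc]; unfold sDom; split_ifs <;> rfl
  have hjc : (j:ℝ) + c ≤ β := by
    rw [hc]; split_ifs with h
    · subst h; rw [hcastN]; unfold betaOne; linarith
    · have h2 : j + 2 ≤ ⌈β⌉₊ := by omega
      have h3 : (j:ℝ) + 2 ≤ (⌈β⌉₊:ℝ) := by exact_mod_cast h2
      have := hNlt hβ; linarith
  have hrange_eq : sRange β j = Set.Ico ((j:ℝ)/β) (((j:ℝ)+c)/β) := by
    unfold sRange; congr 1
    rw [hc]; split_ifs with h
    · have hj' : (j:ℝ) = (⌈β⌉₊:ℝ) - 1 := by rw [h, hcastN]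
      have h2 : ((j:ℝ) + betaOne β)/β = 1 := by
        rw [hj']; unfold betaOne; field_simp; ring
      rw [h2, min_eq_right]
      rw [le_div_iff₀ hb0, one_mul, hj']
      have := hβleN β; linarith
    · rw [min_eq_left]
      rw [div_le_one hb0]
      have h2 : j + 2 ≤ ⌈β⌉₊ := by omega
      have h3 : (j:ℝ) + 2 ≤ (⌈β⌉₊:ℝ) := by exact_mod_cast h2
      have := hNlt hβ; linarith
  -- integrand identities
  have hTg : ∀ x, (starRingEnd ℂ) (Tg β j ξ x) * η x =
      Set.indicator (Set.Icc 0 c) (fun y => (starRingEnd ℂ) (ξ (gBranch β j y)) * η y) x := by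
    intro x
    simp only [Tg, hdom_eq, Set.indicator_apply]
    split_ifs <;> simp
  have hR : ∀ x, (starRingEnd ℂ) (ξ x) * ((Real.sqrt β : ℂ) * sOp β j η x) =
      Set.indicator (sRange β j)
        (fun u => (β:ℂ) * (starRingEnd ℂ) (ξ u) * η (betaMap β u)) x := by
    intro x
    simp only [sOp, Set.indicator_apply]
    split_ifs with h
    · have hss : ((Real.sqrt β : ℝ):ℂ) * ((Real.sqrt β : ℝ):ℂ) = (β:ℂ) := by
        rw [← Complex.ofReal_mul, Real.mul_self_sqrt hb0.le]
      rw [show ((Real.sqrt β : ℝ):ℂ) * (((Real.sqrt β : ℝ):ℂ) * η (betaMap β x)) =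
        (β:ℂ) * η (betaMap β x) by rw [← mul_assoc, hss]]
      ring
    · simp
  -- continuity of G
  have hGcont : Continuous (fun u : ℝ => (β:ℂ) * (starRingEnd ℂ) (ξ u) * η (β * u - j)) := by
    apply Continuous.mul
    · exact continuous_const.mul (Complex.continuous_conj.comp hξ)
    · exact hη.comp ((continuous_const.mul continuous_id).sub continuous_const)
  have hφ : ∀ y ∈ Set.uIcc (0:ℝ) c, HasDerivAt (gBranch β j) β⁻¹ y := by
    intro y _
    have h1 : HasDerivAt (fun t : ℝ => (t + (j:ℝ)) / β) (1 / β) y :=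
      ((hasDerivAt_id y).add_const (j:ℝ)).div_const β
    convert h1 using 1
    · ext t; simp [gBranch]
    · rw [one_div]
  have key := intervalIntegral.integral_comp_smul_deriv hφ continuousOn_const hGcont
  have hint_eq : ∀ y, (starRingEnd ℂ) (ξ (gBranch β j y)) * η y =
      β⁻¹ • ((β:ℂ) * (starRingEnd ℂ) (ξ (gBranch β j y)) * η (β * (gBranch β j y) - j)) := by
    intro y
    have h1 : β * (gBranch β j y) - j = y := by unfold gBranch; field_simp; ring
    rw [h1, Complex.real_smul]
    push_cast
    field_simp
  have hg0 : gBranch β j 0 = (j:ℝ)/β := by unfold gBranch; rw [zero_add]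
  have hgc : gBranch β j c = ((j:ℝ)+c)/β := by unfold gBranch; rw [add_comm]
  have hlo : (j:ℝ)/β ≤ ((j:ℝ)+c)/β := by
    rw [div_le_div_iff₀ hb0 hb0]; nlinarith
  have hEqOn : Set.EqOn (fun u : ℝ => (β:ℂ) * (starRingEnd ℂ) (ξ u) * η (β * u - j))
      (fun u => (β:ℂ) * (starRingEnd ℂ) (ξ u) * η (betaMap β u))
      (Set.Ioo ((j:ℝ)/β) (((j:ℝ)+c)/β)) := by
    rintro u ⟨hu1, hu2⟩
    have h1 : (j:ℝ) < β * u := by rw [div_lt_iff₀ hb0] at hu1; linarith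
    have h2 : β * u < (j:ℝ) + c := by rw [lt_div_iff₀ hb0] at hu2; linarith
    have hfl : ⌊β * u⌋ = (j:ℤ) := by
      rw [Int.floor_eq_iff]
      constructor
      · exact_mod_cast h1.le
      · push_cast; linarith
    simp only [betaMap, hfl]
    norm_num
  have hsub : sRange β j ⊆ Set.Icc (0:ℝ) 1 := by
    rintro u ⟨hu1, hu2⟩
    constructor
    · have : (0:ℝ) ≤ (j:ℝ)/β := by positivity
      linarith
    · exact le_of_lt (lt_of_lt_of_le hu2 (min_le_right _ _))
  calc
    ∫ x in Set.Icc (0:ℝ) 1, (starRingEnd ℂ) (Tg β j ξ x) * η x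
        = ∫ x in Set.Icc (0:ℝ) 1,
            Set.indicator (Set.Icc 0 c) (fun y => (starRingEnd ℂ) (ξ (gBranch β j y)) * η y) x :=
      integral_congr_ae (Filter.Eventually.of_forall hTg)
    _ = ∫ x in Set.Icc (0:ℝ) 1 ∩ Set.Icc 0 c,
          (starRingEnd ℂ) (ξ (gBranch β j x)) * η x := setIntegral_indicator measurableSet_Icc
    _ = ∫ x in Set.Icc (0:ℝ) c, (starRingEnd ℂ) (ξ (gBranch β j x)) * η x := by
      rw [Set.inter_eq_self_of_subset_right (Set.Icc_subset_Icc_right hc1)]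
    _ = ∫ x in Set.Ioc (0:ℝ) c, (starRingEnd ℂ) (ξ (gBranch β j x)) * η x :=
      integral_Icc_eq_integral_Ioc
    _ = ∫ x in (0:ℝ)..c, (starRingEnd ℂ) (ξ (gBranch β j x)) * η x :=
      (intervalIntegral.integral_of_le hc0.le).symm
    _ = ∫ x in (0:ℝ)..c, β⁻¹ •
        ((β:ℂ) * (starRingEnd ℂ) (ξ (gBranch β j x)) * η (β * (gBranch β j x) - j)) :=
      intervalIntegral.integral_congr (fun y _ => hint_eq y)
    _ = ∫ u in (gBranch β j 0)..(gBranch β j c),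
          (β:ℂ) * (starRingEnd ℂ) (ξ u) * η (β * u - j) := key
    _ = ∫ u in ((j:ℝ)/β)..(((j:ℝ)+c)/β), (β:ℂ) * (starRingEnd ℂ) (ξ u) * η (β * u - j) := by
      rw [hg0, hgc]
    _ = ∫ u in Set.Ioc ((j:ℝ)/β) (((j:ℝ)+c)/β), (β:ℂ) * (starRingEnd ℂ) (ξ u) * η (β * u - j) :=
      intervalIntegral.integral_of_le hlo
    _ = ∫ u in Set.Ioo ((j:ℝ)/β) (((j:ℝ)+c)/β), (β:ℂ) * (starRingEnd ℂ) (ξ u) * η (β * u - j) :=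
      integral_Ioc_eq_integral_Ioo
    _ = ∫ u in Set.Ioo ((j:ℝ)/β) (((j:ℝ)+c)/β), (β:ℂ) * (starRingEnd ℂ) (ξ u) * η (betaMap β u) :=
      setIntegral_congr_fun measurableSet_Ioo hEqOn
    _ = ∫ u in Set.Ico ((j:ℝ)/β) (((j:ℝ)+c)/β), (β:ℂ) * (starRingEnd ℂ) (ξ u) * η (betaMap β u) :=
      integral_Ico_eq_integral_Ioo.symm
    _ = ∫ u in sRange β j, (β:ℂ) * (starRingEnd ℂ) (ξ u) * η (betaMap β u) := by
      rw [hrange_eq]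
    _ = ∫ x in Set.Icc (0:ℝ) 1 ∩ sRange β j,
          (β:ℂ) * (starRingEnd ℂ) (ξ x) * η (betaMap β x) := by
      rw [Set.inter_eq_self_of_subset_right hsub]
    _ = ∫ x in Set.Icc (0:ℝ) 1, Set.indicator (sRange β j)
          (fun u => (β:ℂ) * (starRingEnd ℂ) (ξ u) * η (betaMap β u)) x :=
      (setIntegral_indicator (hrange_eq ▸ measurableSet_Ico)).symm
    _ = ∫ x in Set.Icc (0:ℝ) 1, (starRingEnd ℂ) (ξ x) * ((Real.sqrt β : ℂ) * sOp β j η x) :=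
      integral_congr_ae (Filter.Eventually.of_forall (fun x => (hR x).symm))

/-- the operators `s_j = (1/√β) T_{g_j}^*` on `L²([0,1])` (the first
conjunct asserts the adjoint relation `T_{g_j}^* = √β · s_j` as sesquilinear forms)
are partial isometries with `s_i^*s_i = 1` for `i ≤ N-2`, `s_{N-1}^*s_{N-1} = χ_{[0,β₁]}`,
`s_i s_i^* = χ_{[i/β,(i+1)/β)}`, `s_{N-1}s_{N-1}^* = χ_{[(N-1)/β,1)}` and
`Σ_i s_i s_i^* = 1` (operator identities on `L²([0,1])`, i.e. a.e. on `[0,1]`). -/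
theorem sOp_partial_isometries (β : ℝ) (hβ : 1 < β) :
    (∀ j < ⌈β⌉₊, ∀ ξ η : ℝ → ℂ, Continuous ξ → Continuous η →
      ∫ x in Set.Icc (0 : ℝ) 1, (starRingEnd ℂ) (Tg β j ξ x) * η x =
        ∫ x in Set.Icc (0 : ℝ) 1,
          (starRingEnd ℂ) (ξ x) * ((Real.sqrt β : ℂ) * sOp β j η x)) ∧
    (∀ j : ℕ, j ≤ ⌈β⌉₊ - 2 → ∀ ξ : ℝ → ℂ,
      ∀ᵐ x ∂(volume.restrict (Set.Icc (0 : ℝ) 1)),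
        sStarOp β j (sOp β j ξ) x = ξ x) ∧
    (∀ ξ : ℝ → ℂ, ∀ᵐ x ∂(volume.restrict (Set.Icc (0 : ℝ) 1)),
      sStarOp β (⌈β⌉₊ - 1) (sOp β (⌈β⌉₊ - 1) ξ) x =
        Set.indicator (Set.Icc (0 : ℝ) (betaOne β)) ξ x) ∧
    (∀ j : ℕ, j ≤ ⌈β⌉₊ - 2 → ∀ ξ : ℝ → ℂ,
      ∀ᵐ x ∂(volume.restrict (Set.Icc (0 : ℝ) 1)),
        sOp β j (sStarOp β j ξ) x =
          Set.indicator (Set.Ico ((j : ℝ) / β) (((j : ℝ) + 1) / β)) ξ x) ∧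
    (∀ ξ : ℝ → ℂ, ∀ᵐ x ∂(volume.restrict (Set.Icc (0 : ℝ) 1)),
      sOp β (⌈β⌉₊ - 1) (sStarOp β (⌈β⌉₊ - 1) ξ) x =
        Set.indicator (Set.Ico (((⌈β⌉₊ : ℝ) - 1) / β) 1) ξ x) ∧
    (∀ ξ : ℝ → ℂ, ∀ᵐ x ∂(volume.restrict (Set.Icc (0 : ℝ) 1)),
      ∑ j ∈ Finset.range ⌈β⌉₊, sOp β j (sStarOp β j ξ) x = ξ x) := by
  refine ⟨?_, ?_, ?_, ?_, ?_, ?_⟩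
  · intro j hj ξ η hξ hη
    exact conj1 hβ j hj ξ η hξ hη
  · intro j hj ξ
    exact conj2 hβ j hj ξ
  · intro ξ
    exact conj3 hβ ξ
  · intro j hj ξ
    exact Filter.Eventually.of_forall (conj4 hβ j hj ξ)
  · intro ξ
    exact Filter.Eventually.of_forall (conj5 hβ ξ)
  · intro ξ
    exact conj6 hβ ξ
end

section
/- With the operators above, T_{f_β}* T_{f_β} = ((N-1)/β)·1 + (1/β)·χ_{[0,β_1]}, where (T_{f_β}ξ)(x) = ξ(f_β(x)). -/
open MeasureTheory
open scoped Classical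

/-- `T_{f_β}^* T_{f_β} = ((N-1)/β)·1 + (1/β)·χ_{[0,β₁]}`, stated as an
identity of sesquilinear forms `⟨T_{f_β}ξ, T_{f_β}η⟩ = ⟨ξ, (((N-1)/β) + (1/β)χ_{[0,β₁]})η⟩`
on `L²([0,1])`. -/
theorem Tf_star_Tf (β : ℝ) (hβ : 1 < β) :
    ∀ ξ η : ℝ → ℂ, Continuous ξ → Continuous η →
      ∫ x in Set.Icc (0 : ℝ) 1, (starRingEnd ℂ) (Tf β ξ x) * Tf β η x =
        ∫ x in Set.Icc (0 : ℝ) 1, (starRingEnd ℂ) (ξ x) *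
          (((((⌈β⌉₊ : ℝ) - 1) / β : ℝ) : ℂ) * η x +
            (((1 : ℝ) / β : ℝ) : ℂ) *
              Set.indicator (Set.Icc (0 : ℝ) (betaOne β)) η x) := by
  intro ξ η hξ hη
  have hβ0 : (0:ℝ) < β := lt_trans one_pos hβ
  have hβne : β ≠ 0 := ne_of_gt hβ0
  set N := ⌈β⌉₊ with hNdef
  have hN2 : 2 ≤ N := by
    have h1 : (1:ℕ) < N := Nat.lt_ceil.mpr (by exact_mod_cast hβ)
    omega
  have hβleN : β ≤ (N:ℝ) := Nat.le_ceil β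
  have hNltβ : (N:ℝ) - 1 < β := by
    have := Nat.ceil_lt_add_one hβ0.le
    linarith
  have hb1 : betaOne β = β - ((N:ℝ) - 1) := rfl
  have hb1pos : 0 < betaOne β := by rw [hb1]; linarith
  have hb1le : betaOne β ≤ 1 := by rw [hb1]; linarith
  set F : ℝ → ℂ := fun y => (starRingEnd ℂ) (ξ y) * η y with hF
  have hFcont : Continuous F := by
    exact Continuous.mul (Complex.continuous_conj.comp hξ) hη
  -- measurability / integrability of x ↦ F (betaMap β x)
  have hbm : Measurable (betaMap β) := by
    have h : betaMap β = fun x => Int.fract (β * x) := rfl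
    rw [h]
    exact measurable_fract.comp (measurable_id.const_mul β)
  have hGmeas : Measurable fun x => F (betaMap β x) := hFcont.measurable.comp hbm
  have hmem : ∀ x, betaMap β x ∈ Set.Icc (0:ℝ) 1 := fun x =>
    ⟨Int.fract_nonneg (β * x), (Int.fract_lt_one (β * x)).le⟩
  obtain ⟨C, hC⟩ := (isCompact_Icc : IsCompact (Set.Icc (0:ℝ) 1)).exists_bound_of_continuousOn
    hFcont.continuousOn
  have hC0 : 0 ≤ C := le_trans (norm_nonneg _) (hC 0 ⟨le_refl 0, zero_le_one⟩)
  have hint : ∀ u v : ℝ, IntervalIntegrable (fun x => F (betaMap β x)) volume u v := by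
    intro u v
    refine (intervalIntegrable_const (c := C)).mono_fun
      hGmeas.aestronglyMeasurable.restrict (ae_of_all _ fun x => ?_)
    simpa [Real.norm_eq_abs, abs_of_nonneg hC0] using hC _ (hmem x)
  -- the partition points
  set a : ℕ → ℝ := fun j => min ((j:ℝ)/β) 1 with hadef
  have ha0 : a 0 = 0 := by simp [hadef]
  have haN : a N = 1 := by
    have h1 : (1:ℝ) ≤ (N:ℝ)/β := (one_le_div hβ0).mpr hβleN
    simp [hadef, min_eq_right h1]
  have haj : ∀ j < N, a j = (j:ℝ)/β := by
    intro j hj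
    have hj' : (j:ℝ) + 1 ≤ (N:ℝ) := by exact_mod_cast Nat.succ_le_of_lt hj
    have hle1 : (j:ℝ)/β ≤ 1 := by rw [div_le_one hβ0]; linarith
    simp [hadef, min_eq_left hle1]
  have hamono : ∀ j : ℕ, a j ≤ a (j+1) := by
    intro j
    have h : (j:ℝ)/β ≤ ((j+1:ℕ):ℝ)/β := by
      gcongr
      push_cast; linarith
    exact min_le_min h le_rfl
  have hatop : ∀ j : ℕ, β * a (j+1) ≤ (j:ℝ) + 1 := by
    intro j
    have h1 : a (j+1) ≤ ((j+1:ℕ):ℝ)/β := min_le_left _ _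
    have := mul_le_mul_of_nonneg_left h1 hβ0.le
    calc β * a (j+1) ≤ β * (((j+1:ℕ):ℝ)/β) := this
      _ = (j:ℝ) + 1 := by field_simp; norm_num
  -- the floor identification on each open subinterval
  have hfloor : ∀ j < N, ∀ x ∈ Set.Ioo (a j) (a (j+1)), betaMap β x = β * x - (j:ℝ) := by
    intro j hj x hx
    have h1 : (j:ℝ) < β * x := by
      have hxl := hx.1
      rw [haj j hj] at hxl
      have := (div_lt_iff₀ hβ0).mp hxl
      linarith
    have h2 : β * x < (j:ℝ) + 1 := by
      have hxr : β * x < β * a (j+1) := by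
        have := hx.2
        exact (mul_lt_mul_iff_right₀ hβ0).mpr this
      exact lt_of_lt_of_le hxr (hatop j)
    have hfl : ⌊β * x⌋ = (j:ℤ) := by
      rw [Int.floor_eq_iff]
      constructor
      · push_cast; linarith
      · push_cast; linarith
    simp [betaMap, hfl]
  -- value of each piece
  have hpiece : ∀ j < N, (∫ x in a j..a (j+1), F (betaMap β x))
      = β⁻¹ • ∫ x in (0:ℝ)..(β * a (j+1) - (j:ℝ)), F x := by
    intro j hj
    have hcongr : (∫ x in a j..a (j+1), F (betaMap β x))
        = ∫ x in a j..a (j+1), F (β * x - (j:ℝ)) := by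
      apply intervalIntegral.integral_congr_ae
      have hnull : (volume : Measure ℝ) {a (j+1)} = 0 := Real.volume_singleton
      filter_upwards [measure_eq_zero_iff_ae_notMem.mp hnull] with x hx hxI
      rw [Set.uIoc_of_le (hamono j)] at hxI
      have hxo : x ∈ Set.Ioo (a j) (a (j+1)) :=
        ⟨hxI.1, lt_of_le_of_ne hxI.2 (by simpa using hx)⟩
      rw [hfloor j hj x hxo]
    rw [hcongr, intervalIntegral.integral_comp_mul_sub F hβne (j:ℝ)]
    have h0 : β * a j - (j:ℝ) = 0 := by
      rw [haj j hj]; field_simp; ring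
    rw [h0]
  -- split the integral
  have hLHS1 : (∫ x in Set.Icc (0:ℝ) 1, (starRingEnd ℂ) (Tf β ξ x) * Tf β η x)
      = ∫ x in Set.Icc (0:ℝ) 1, F (betaMap β x) := by
    apply MeasureTheory.setIntegral_congr_fun measurableSet_Icc
    intro x hx
    simp only [Tf, if_pos hx, hF]
  have hLHS2 : (∫ x in Set.Icc (0:ℝ) 1, F (betaMap β x))
      = ∫ x in (0:ℝ)..1, F (betaMap β x) := by
    rw [MeasureTheory.integral_Icc_eq_integral_Ioc,
      intervalIntegral.integral_of_le zero_le_one]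
  have hsum : (∫ x in (0:ℝ)..1, F (betaMap β x))
      = ∑ j ∈ Finset.range N, ∫ x in a j..a (j+1), F (betaMap β x) := by
    rw [intervalIntegral.sum_integral_adjacent_intervals (fun k _ => hint _ _), ha0, haN]
  obtain ⟨M, hM⟩ : ∃ M, N = M + 1 := ⟨N - 1, by omega⟩
  have hval : (∑ j ∈ Finset.range N, ∫ x in a j..a (j+1), F (betaMap β x))
      = (M:ℂ) * (β⁻¹ • ∫ x in (0:ℝ)..1, F x) + β⁻¹ • ∫ x in (0:ℝ)..(betaOne β), F x := by
    rw [hM, Finset.sum_range_succ]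
    have hfirst : ∀ j ∈ Finset.range M, (∫ x in a j..a (j+1), F (betaMap β x))
        = β⁻¹ • ∫ x in (0:ℝ)..1, F x := by
      intro j hj
      rw [Finset.mem_range] at hj
      rw [hpiece j (by omega)]
      congr 1
      rw [haj (j+1) (by omega)]
      push_cast
      field_simp
      ring_nf
    have hlast : (∫ x in a M..a (M+1), F (betaMap β x))
        = β⁻¹ • ∫ x in (0:ℝ)..(betaOne β), F x := by
      rw [hpiece M (by omega)]
      congr 1
      have haM1 : a (M+1) = 1 := by rw [← hM]; exact haN
      rw [haM1, hb1, hM]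
      push_cast
      ring
    rw [Finset.sum_congr rfl hfirst, hlast, Finset.sum_const, Finset.card_range]
    rw [nsmul_eq_mul]
  -- RHS computation
  set c₁ : ℂ := ((((N:ℝ) - 1) / β : ℝ) : ℂ) with hc₁
  set c₂ : ℂ := (((1:ℝ) / β : ℝ) : ℂ) with hc₂
  have hIntF : MeasureTheory.IntegrableOn F (Set.Icc (0:ℝ) 1) := hFcont.integrableOn_Icc
  have hRHS : (∫ x in Set.Icc (0:ℝ) 1, (starRingEnd ℂ) (ξ x) *
        (c₁ * η x + c₂ * Set.indicator (Set.Icc (0:ℝ) (betaOne β)) η x))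
      = c₁ * (∫ x in Set.Icc (0:ℝ) 1, F x) + c₂ * ∫ x in Set.Icc (0:ℝ) (betaOne β), F x := by
    have hpt : ∀ x, (starRingEnd ℂ) (ξ x) *
        (c₁ * η x + c₂ * Set.indicator (Set.Icc (0:ℝ) (betaOne β)) η x)
        = c₁ * F x + c₂ * Set.indicator (Set.Icc (0:ℝ) (betaOne β)) F x := by
      intro x
      by_cases hx : x ∈ Set.Icc (0:ℝ) (betaOne β) <;>
        simp [Set.indicator, hx, hF] <;> ring
    simp_rw [hpt]
    rw [MeasureTheory.integral_add ((hIntF.const_mul c₁))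
      ((hIntF.indicator measurableSet_Icc).const_mul c₂),
      MeasureTheory.integral_const_mul, MeasureTheory.integral_const_mul,
      MeasureTheory.setIntegral_indicator measurableSet_Icc]
    have hinter : Set.Icc (0:ℝ) 1 ∩ Set.Icc (0:ℝ) (betaOne β) = Set.Icc (0:ℝ) (betaOne β) := by
      rw [Set.Icc_inter_Icc]
      simp [min_eq_right hb1le]
    rw [hinter]
  rw [hLHS1, hLHS2, hsum, hval, hRHS]
  have hI1 : (∫ x in Set.Icc (0:ℝ) 1, F x) = ∫ x in (0:ℝ)..1, F x := by
    rw [MeasureTheory.integral_Icc_eq_integral_Ioc, intervalIntegral.integral_of_le zero_le_one]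
  have hI2 : (∫ x in Set.Icc (0:ℝ) (betaOne β), F x) = ∫ x in (0:ℝ)..(betaOne β), F x := by
    rw [MeasureTheory.integral_Icc_eq_integral_Ioc,
      intervalIntegral.integral_of_le hb1pos.le]
  rw [hI1, hI2]
  have hMc : (M:ℂ) = (N:ℂ) - 1 := by
    rw [hM]; push_cast; ring
  rw [hMc]
  simp only [Complex.real_smul, hc₁, hc₂]
  push_cast
  ring
end

section
/- With the operators above, T_{f_β}* = (1/β) Σ_{i=0}^{N-1} T_{g_i}. -/
open MeasureTheory
open scoped Classical

/-- `T_{f_β}^* = (1/β) Σ_{i=0}^{N-1} T_{g_i}`, stated as the identity of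
sesquilinear forms `⟨(1/β) Σ_i T_{g_i} ξ, η⟩ = ⟨ξ, T_{f_β} η⟩` on `L²([0,1])`. -/
theorem Tf_adjoint (β : ℝ) (hβ : 1 < β) :
    ∀ ξ η : ℝ → ℂ, Continuous ξ → Continuous η →
      ∫ x in Set.Icc (0 : ℝ) 1,
          (starRingEnd ℂ) ((((β : ℝ)⁻¹ : ℝ) : ℂ) *
            ∑ i ∈ Finset.range ⌈β⌉₊, Tg β i ξ x) * η x =
        ∫ x in Set.Icc (0 : ℝ) 1, (starRingEnd ℂ) (ξ x) * Tf β η x := by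
  intro ξ η hξ hη
  have hβ0 : (0:ℝ) < β := lt_trans one_pos hβ
  have hβne : β ≠ 0 := ne_of_gt hβ0
  set N := ⌈β⌉₊ with hNdef
  have hN1 : 1 < N := by rw [hNdef, Nat.lt_ceil]; exact_mod_cast hβ
  have hNle : β ≤ (N:ℝ) := Nat.le_ceil β
  have hNlt : (N:ℝ) - 1 < β := by
    have := Nat.ceil_lt_add_one (le_of_lt hβ0)
    rw [← hNdef] at this; linarith
  have hb1pos : 0 < betaOne β := by
    unfold betaOne; rw [← hNdef]; linarith
  have hb1le : betaOne β ≤ 1 := by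
    unfold betaOne; rw [← hNdef]; linarith
  -- the upper endpoint of the domain of `g_i`
  set m : ℕ → ℝ := fun i => if i = N - 1 then betaOne β else 1 with hmdef
  have hm0 : ∀ i, 0 ≤ m i := by
    intro i; simp only [hmdef]
    split
    · exact le_of_lt hb1pos
    · exact zero_le_one
  have hm1 : ∀ i, m i ≤ 1 := by
    intro i; simp only [hmdef]
    split
    · exact hb1le
    · exact le_rfl
  have hsdom : ∀ i, sDom β i = Set.Icc 0 (m i) := by
    intro i; simp only [sDom, hmdef, ← hNdef]
    split <;> rfl
  -- the endpoints of the range interval of `g_i`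
  set r : ℕ → ℝ := fun i => min (((i:ℝ) + 1) / β) 1 with hrdef
  have hr : ∀ i < N, (m i + (i:ℝ)) / β = r i := by
    intro i hi
    simp only [hmdef, hrdef]
    by_cases h : i = N - 1
    · subst h
      have hc : ((N - 1 : ℕ) : ℝ) = (N:ℝ) - 1 := by
        push_cast [Nat.cast_sub (le_of_lt hN1)]; ring
      rw [if_pos rfl]
      have h1 : (betaOne β + ((N - 1 : ℕ) : ℝ)) / β = 1 := by
        unfold betaOne; rw [← hNdef, hc]; field_simp; ring
      have h2 : min ((((N - 1 : ℕ) : ℝ) + 1) / β) 1 = 1 := by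
        apply min_eq_right
        rw [le_div_iff₀ hβ0, one_mul, hc]; linarith
      rw [h1, h2]
    · rw [if_neg h]
      have hile : (i:ℝ) + 1 ≤ (N:ℝ) - 1 := by
        have h' : i + 1 ≤ N - 1 := by omega
        have := (Nat.cast_le (α := ℝ)).2 h'
        push_cast [Nat.cast_sub (le_of_lt hN1)] at this; linarith
      have h2 : min (((i:ℝ) + 1) / β) 1 = ((i:ℝ) + 1) / β := by
        apply min_eq_left
        rw [div_le_iff₀ hβ0, one_mul]; linarith
      rw [h2, add_comm]
  have hlo : ∀ i < N, (i:ℝ) / β ≤ r i := by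
    intro i hi
    rw [← hr i hi]
    gcongr
    linarith [hm0 i]
  -- the comparison function on each piece
  set F : ℕ → ℝ → ℂ := fun i x => (starRingEnd ℂ) (ξ x) * η (β * x - (i:ℝ)) with hFdef
  have hFc : ∀ i, Continuous (F i) := by
    intro i
    exact (continuous_star.comp hξ).mul
      (hη.comp ((continuous_const.mul continuous_id).sub continuous_const))
  -- pointwise indicator form of the LHS integrand pieces
  have hind : ∀ i x, (starRingEnd ℂ) (Tg β i ξ x) * η x
      = (Set.Icc (0:ℝ) (m i)).indicator
          (fun y => (starRingEnd ℂ) (ξ (gBranch β i y)) * η y) x := by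
    intro i x
    simp only [Tg, hsdom i, Set.indicator]
    split <;> simp
  have hGc : ∀ i : ℕ, Continuous fun y => (starRingEnd ℂ) (ξ (gBranch β i y)) * η y := by
    intro i
    exact (continuous_star.comp (hξ.comp
      ((continuous_id.add continuous_const).div_const β))).mul hη
  -- key substitution identity for each piece
  have key : ∀ i < N, (∫ x in Set.Icc (0:ℝ) 1, (starRingEnd ℂ) (Tg β i ξ x) * η x)
      = β • ∫ x in ((i:ℝ)/β)..(r i), F i x := by
    intro i hi
    simp only [hind i]
    rw [setIntegral_indicator measurableSet_Icc]
    have hcap : Set.Icc (0:ℝ) 1 ∩ Set.Icc 0 (m i) = Set.Icc 0 (m i) := by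
      rw [Set.Icc_inter_Icc, max_self, min_eq_right (hm1 i)]
    rw [hcap, integral_Icc_eq_integral_Ioc, ← intervalIntegral.integral_of_le (hm0 i)]
    have hcomp : ∀ x : ℝ, (starRingEnd ℂ) (ξ (gBranch β i x)) * η x
        = F i (β⁻¹ * x + (i:ℝ)/β) := by
      intro x
      have h1 : β⁻¹ * x + (i:ℝ)/β = (x + i)/β := by field_simp
      rw [h1]
      simp only [hFdef, gBranch]
      congr 2
      field_simp; ring
    simp only [hcomp]
    rw [intervalIntegral.integral_comp_mul_add (F i) (inv_ne_zero hβne) ((i:ℝ)/β), inv_inv]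
    have e1 : β⁻¹ * 0 + (i:ℝ)/β = (i:ℝ)/β := by ring
    have e2 : β⁻¹ * m i + (i:ℝ)/β = r i := by
      rw [← hr i hi]; field_simp
    rw [e1, e2]
  -- the floor is `i` on the `i`-th piece
  have hfl : ∀ i < N, Set.EqOn (fun x => (starRingEnd ℂ) (ξ x) * η (betaMap β x)) (F i)
      (Set.Ico ((i:ℝ)/β) (r i)) := by
    intro i hi x hx
    obtain ⟨hx1, hx2⟩ := hx
    have hxb1 : (i:ℝ) ≤ β * x := by
      rw [div_le_iff₀ hβ0] at hx1; linarith
    have hxb2 : β * x < (i:ℝ) + 1 := by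
      have h' : x < ((i:ℝ) + 1)/β := lt_of_lt_of_le hx2 (min_le_left _ _)
      rw [lt_div_iff₀ hβ0] at h'; linarith
    have hfloor : ⌊β * x⌋ = (i:ℤ) := by
      rw [Int.floor_eq_iff]
      constructor <;> push_cast <;> linarith
    simp only [betaMap, hfloor, hFdef, Int.cast_natCast]
  -- the pieces cover `[0,1)`
  have hunion : Set.Ico (0:ℝ) 1 = ⋃ i ∈ Finset.range N, Set.Ico ((i:ℝ)/β) (r i) := by
    ext x
    simp only [Set.mem_Ico, Set.mem_iUnion, Finset.mem_range]
    constructor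
    · rintro ⟨hx0, hx1⟩
      have hbx0 : 0 ≤ β * x := by positivity
      refine ⟨⌊β * x⌋₊, ?_, ?_, ?_⟩
      · rw [Nat.floor_lt hbx0]
        nlinarith
      · rw [div_le_iff₀ hβ0]
        have := Nat.floor_le hbx0
        linarith
      · refine lt_min ?_ hx1
        rw [lt_div_iff₀ hβ0]
        have := Nat.lt_floor_add_one (β * x)
        linarith
    · rintro ⟨i, hiN, hx1, hx2⟩
      exact ⟨le_trans (div_nonneg (Nat.cast_nonneg i) (le_of_lt hβ0)) hx1,
        lt_of_lt_of_le hx2 (min_le_right _ _)⟩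
  -- the pieces are pairwise disjoint
  have hdisj : (↑(Finset.range N) : Set ℕ).Pairwise
      (Function.onFun Disjoint fun i => Set.Ico ((i:ℝ)/β) (r i)) := by
    have hkey : ∀ a b : ℕ, a < b →
        Disjoint (Set.Ico ((a:ℝ)/β) (r a)) (Set.Ico ((b:ℝ)/β) (r b)) := by
      intro a b hab
      apply Set.Ico_disjoint_Ico.mpr
      have h1 : r a ≤ (b:ℝ)/β := by
        refine le_trans (min_le_left _ _) ?_
        gcongr
        exact_mod_cast Nat.succ_le_of_lt hab
      calc min (r a) (r b) ≤ r a := min_le_left _ _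
        _ ≤ (b:ℝ)/β := h1
        _ ≤ max ((a:ℝ)/β) ((b:ℝ)/β) := le_max_right _ _
    intro i _ j _ hij
    rcases hij.lt_or_gt with h | h
    · exact hkey i j h
    · exact (hkey j i h).symm
  -- integrability of the RHS integrand on each piece
  have hint : ∀ i ∈ Finset.range N,
      IntegrableOn (fun x => (starRingEnd ℂ) (ξ x) * η (betaMap β x))
        (Set.Ico ((i:ℝ)/β) (r i)) volume := by
    intro i hi
    rw [Finset.mem_range] at hi
    exact (((hFc i).integrableOn_Icc).mono_set Set.Ico_subset_Icc_self).congr_fun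
      ((hfl i hi).symm) measurableSet_Ico
  -- assemble the right-hand side
  have hRHS : (∫ x in Set.Icc (0:ℝ) 1, (starRingEnd ℂ) (ξ x) * Tf β η x)
      = ∑ i ∈ Finset.range N, ∫ x in ((i:ℝ)/β)..(r i), F i x := by
    have h1 : (∫ x in Set.Icc (0:ℝ) 1, (starRingEnd ℂ) (ξ x) * Tf β η x)
        = ∫ x in Set.Icc (0:ℝ) 1, (starRingEnd ℂ) (ξ x) * η (betaMap β x) := by
      refine setIntegral_congr_fun measurableSet_Icc ?_
      intro x hx
      simp only [Tf, if_pos hx]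
    rw [h1, ← setIntegral_congr_set (Ico_ae_eq_Icc (a := (0:ℝ)) (b := 1) (μ := volume)),
      hunion, integral_biUnion_finset (Finset.range N) (fun _ _ => measurableSet_Ico) hdisj hint]
    refine Finset.sum_congr rfl ?_
    intro i hi
    rw [Finset.mem_range] at hi
    rw [setIntegral_congr_fun measurableSet_Ico (hfl i hi),
      setIntegral_congr_set (Ico_ae_eq_Icc (μ := volume)),
      integral_Icc_eq_integral_Ioc, ← intervalIntegral.integral_of_le (hlo i hi)]
  -- assemble the left-hand side
  have hpull : ∀ x, (starRingEnd ℂ) ((((β : ℝ)⁻¹ : ℝ) : ℂ) *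
        ∑ i ∈ Finset.range N, Tg β i ξ x) * η x
      = (((β : ℝ)⁻¹ : ℝ) : ℂ) *
        ∑ i ∈ Finset.range N, (starRingEnd ℂ) (Tg β i ξ x) * η x := by
    intro x
    rw [map_mul, Complex.conj_ofReal, map_sum, mul_assoc, Finset.sum_mul]
  have hintL : ∀ i ∈ Finset.range N,
      IntegrableOn (fun x => (starRingEnd ℂ) (Tg β i ξ x) * η x) (Set.Icc (0:ℝ) 1) volume := by
    intro i _
    have : (fun x => (starRingEnd ℂ) (Tg β i ξ x) * η x)
        = (Set.Icc (0:ℝ) (m i)).indicator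
            (fun y => (starRingEnd ℂ) (ξ (gBranch β i y)) * η y) := by
      funext x; exact hind i x
    rw [this]
    exact ((hGc i).integrableOn_Icc).indicator measurableSet_Icc
  calc (∫ x in Set.Icc (0:ℝ) 1, (starRingEnd ℂ) ((((β : ℝ)⁻¹ : ℝ) : ℂ) *
          ∑ i ∈ Finset.range N, Tg β i ξ x) * η x)
      = ∫ x in Set.Icc (0:ℝ) 1, (((β : ℝ)⁻¹ : ℝ) : ℂ) *
          ∑ i ∈ Finset.range N, (starRingEnd ℂ) (Tg β i ξ x) * η x := by
        simp only [hpull]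
    _ = (((β : ℝ)⁻¹ : ℝ) : ℂ) * ∑ i ∈ Finset.range N,
          ∫ x in Set.Icc (0:ℝ) 1, (starRingEnd ℂ) (Tg β i ξ x) * η x := by
        rw [integral_const_mul, integral_finset_sum _ hintL]
    _ = ∑ i ∈ Finset.range N, ∫ x in ((i:ℝ)/β)..(r i), F i x := by
        rw [Finset.mul_sum]
        refine Finset.sum_congr rfl ?_
        intro i hi
        rw [Finset.mem_range] at hi
        rw [key i hi, Complex.real_smul, ← mul_assoc, ← Complex.ofReal_mul,
          inv_mul_cancel₀ hβne, Complex.ofReal_one, one_mul]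
    _ = ∫ x in Set.Icc (0:ℝ) 1, (starRingEnd ℂ) (ξ x) * Tf β η x := hRHS.symm
end

section
/- For the operators s_j = (1/√β)T_{g_j}* on L²([0,1]) and the digits ξ_1ξ_2··· of the β-expansion of 1, one has s_{ξ_n}*···s_{ξ_1}* s_{ξ_1}···s_{ξ_n} = χ_{[0,β_n]} for every n ≥ 1, where β_n = β^n - ξ_1β^{n-1} - ··· - ξ_n. -/
open MeasureTheory
open scoped Classical

/-- The quasi-greedy β-transformation `x ↦ βx - (⌈βx⌉ - 1)`, used to generate the
digits of the expansion of `1` (the maximal sequence `ξ_β` of the β-shift). -/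
noncomputable def qMap (β x : ℝ) : ℝ := β * x - (⌈β * x⌉ - 1)

/-- The `(n+1)`-st digit `ξ_{n+1}` of the β-expansion of `1`. -/
noncomputable def qDigit (β : ℝ) (n : ℕ) : ℤ := ⌈β * (qMap β)^[n] 1⌉ - 1

/-- The digit `ξ_{n+1}` as a natural number. -/
noncomputable def xiNat (β : ℝ) (n : ℕ) : ℕ := (qDigit β n).toNat

/-- `β_n = β^n - ξ_1 β^{n-1} - ⋯ - ξ_n`. -/
noncomputable def betaSeq (β : ℝ) (n : ℕ) : ℝ :=
  β ^ n - ∑ j ∈ Finset.range n, (qDigit β j : ℝ) * β ^ (n - 1 - j)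

/-- The product `s_{ξ_1} s_{ξ_2} ⋯ s_{ξ_n}` applied to a function. -/
noncomputable def sWord (β : ℝ) : ℕ → (ℝ → ℂ) → ℝ → ℂ
  | 0 => fun ξ => ξ
  | n + 1 => fun ξ => sWord β n (sOp β (xiNat β n) ξ)

/-- The product `s_{ξ_n}^* ⋯ s_{ξ_1}^*` applied to a function. -/
noncomputable def sWordStar (β : ℝ) : ℕ → (ℝ → ℂ) → ℝ → ℂ
  | 0 => fun ξ => ξ
  | n + 1 => fun ξ => sStarOp β (xiNat β n) (sWordStar β n ξ)

section Aux

variable {β : ℝ}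

lemma qMap_mem_Ioc (hβ : 1 < β) {x : ℝ} (hx : x ∈ Set.Ioc (0:ℝ) 1) :
    qMap β x ∈ Set.Ioc (0:ℝ) 1 := by
  have hb : 0 < β := lt_trans one_pos hβ
  have hx0 : 0 < β * x := mul_pos hb hx.1
  have h1 := Int.ceil_lt_add_one (β * x)
  have h2 := Int.le_ceil (β * x)
  constructor <;> simp only [qMap] <;> linarith

lemma iter_mem_Ioc (hβ : 1 < β) (n : ℕ) : (qMap β)^[n] 1 ∈ Set.Ioc (0:ℝ) 1 := by
  induction n with
  | zero => simp
  | succ n ih => rw [Function.iterate_succ_apply']; exact qMap_mem_Ioc hβ ih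

lemma betaSeq_succ (β : ℝ) (n : ℕ) :
    betaSeq β (n + 1) = β * betaSeq β n - (qDigit β n : ℝ) := by
  simp only [betaSeq]
  rw [Finset.sum_range_succ]
  have h1 : ∀ j ∈ Finset.range n, (qDigit β j : ℝ) * β ^ (n + 1 - 1 - j)
      = β * ((qDigit β j : ℝ) * β ^ (n - 1 - j)) := by
    intro j hj
    have hj' : j < n := Finset.mem_range.mp hj
    have h : n + 1 - 1 - j = (n - 1 - j) + 1 := by omega
    rw [h, pow_succ]; ring
  rw [Finset.sum_congr rfl h1, ← Finset.mul_sum]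
  have h2 : n + 1 - 1 - n = 0 := by omega
  rw [h2, pow_zero, pow_succ]
  ring

lemma betaSeq_eq_iter (β : ℝ) : ∀ n, betaSeq β n = (qMap β)^[n] 1 := by
  intro n
  induction n with
  | zero => simp [betaSeq]
  | succ n ih =>
    rw [betaSeq_succ, ih, Function.iterate_succ_apply']
    simp only [qMap, qDigit]
    push_cast
    ring

lemma betaSeq_mem_Ioc (hβ : 1 < β) (n : ℕ) : betaSeq β n ∈ Set.Ioc (0:ℝ) 1 := by
  rw [betaSeq_eq_iter]; exact iter_mem_Ioc hβ n

lemma qDigit_nonneg (hβ : 1 < β) (n : ℕ) : 0 ≤ qDigit β n := by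
  have hb : 0 < β := lt_trans one_pos hβ
  have h := (iter_mem_Ioc hβ n).1
  have hpos : (0:ℤ) < ⌈β * (qMap β)^[n] 1⌉ := Int.ceil_pos.mpr (mul_pos hb h)
  simp only [qDigit]; omega

lemma xiNat_cast (hβ : 1 < β) (n : ℕ) : (xiNat β n : ℝ) = (qDigit β n : ℝ) := by
  simp only [xiNat]
  rw [← Int.cast_natCast, Int.toNat_of_nonneg (qDigit_nonneg hβ n)]

lemma ceil_two_le (hβ : 1 < β) : 1 < ⌈β⌉₊ :=
  Nat.lt_ceil.mpr (by exact_mod_cast hβ)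

lemma xiNat_le (hβ : 1 < β) (n : ℕ) : xiNat β n ≤ ⌈β⌉₊ - 1 := by
  have hb : 0 < β := lt_trans one_pos hβ
  have hB := iter_mem_Ioc hβ n
  have h1 : β * (qMap β)^[n] 1 ≤ β := by nlinarith [hB.1, hB.2]
  have h2 : ⌈β * (qMap β)^[n] 1⌉ ≤ ⌈β⌉ := Int.ceil_le_ceil h1
  have h3 : ((⌈β⌉₊ : ℤ)) = ⌈β⌉ := Int.natCast_ceil_eq_ceil hb.le
  have h4 : 1 < ⌈β⌉₊ := ceil_two_le hβ
  simp only [xiNat, qDigit]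
  omega

lemma gBranch_preimage_null (hβ : 1 < β) (j : ℕ) {S : Set ℝ} (hS : volume S = 0) :
    volume (gBranch β j ⁻¹' S) = 0 := by
  have hb : 0 < β := lt_trans one_pos hβ
  have he : gBranch β j ⁻¹' S = (· + (j:ℝ)) ⁻¹' ((· * β⁻¹) ⁻¹' S) := by
    ext x; simp [gBranch, div_eq_mul_inv]
  rw [he, measure_preimage_add_right,
    Real.volume_preimage_mul_right (inv_ne_zero hb.ne'), hS, mul_zero]

lemma gBranch_mem_Icc (hβ : 1 < β) {j : ℕ} (hj : j ≤ ⌈β⌉₊ - 1) {x : ℝ}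
    (hx : x ∈ sDom β j) : gBranch β j x ∈ Set.Icc (0:ℝ) 1 := by
  have hb : 0 < β := lt_trans one_pos hβ
  have hN : 1 < ⌈β⌉₊ := ceil_two_le hβ
  simp only [sDom] at hx
  simp only [gBranch, Set.mem_Icc]
  by_cases hc : j = ⌈β⌉₊ - 1
  · rw [if_pos hc] at hx
    have hcast : (j:ℝ) = (⌈β⌉₊:ℝ) - 1 := by
      rw [hc, Nat.cast_sub (by omega : 1 ≤ ⌈β⌉₊), Nat.cast_one]
    have hx2 : x ≤ β - ((⌈β⌉₊:ℝ) - 1) := hx.2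
    constructor
    · exact div_nonneg (by linarith [hx.1, @Nat.cast_nonneg ℝ _ _ _ j]) hb.le
    · rw [div_le_one hb]; rw [hcast]; linarith
  · rw [if_neg hc] at hx
    have h2 : j + 2 ≤ ⌈β⌉₊ := by omega
    have h3 : (⌈β⌉₊:ℝ) < β + 1 := Nat.ceil_lt_add_one hb.le
    have h2' : ((j:ℝ) + 2) ≤ (⌈β⌉₊:ℝ) := by exact_mod_cast h2
    constructor
    · exact div_nonneg (by linarith [hx.1, @Nat.cast_nonneg ℝ _ _ _ j]) hb.le
    · rw [div_le_one hb]; linarith [hx.2]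

lemma ae_comp_gBranch (hβ : 1 < β) (j : ℕ) (hj : j ≤ ⌈β⌉₊ - 1) {P : ℝ → Prop}
    (hP : ∀ᵐ y ∂(volume.restrict (Set.Icc (0:ℝ) 1)), P y) :
    ∀ᵐ x ∂(volume.restrict (Set.Icc (0:ℝ) 1)),
      x ∈ sDom β j → P (gBranch β j x) := by
  rw [ae_iff, Measure.restrict_apply' measurableSet_Icc] at hP
  have hsub : {x | ¬ (x ∈ sDom β j → P (gBranch β j x))}
      ⊆ gBranch β j ⁻¹' ({y | ¬ P y} ∩ Set.Icc (0:ℝ) 1) := by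
    intro x hx
    rw [Set.mem_setOf_eq, _root_.not_imp] at hx
    exact ⟨hx.2, gBranch_mem_Icc hβ hj hx.1⟩
  have h0 : volume {x | ¬ (x ∈ sDom β j → P (gBranch β j x))} = 0 :=
    measure_mono_null hsub (gBranch_preimage_null hβ j hP)
  exact Filter.Eventually.filter_mono (ae_mono Measure.restrict_le_self) (ae_iff.mpr h0)

end Aux

/-- `s_{ξ_n}^*⋯s_{ξ_1}^* s_{ξ_1}⋯s_{ξ_n} = χ_{[0,β_n]}` as operators on
`L²([0,1])` (i.e. a.e. on `[0,1]`), for every `n ≥ 1`. -/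
theorem sWordStar_sWord (β : ℝ) (hβ : 1 < β) (n : ℕ) (hn : 1 ≤ n) (ξ : ℝ → ℂ) :
    ∀ᵐ x ∂(volume.restrict (Set.Icc (0 : ℝ) 1)),
      sWordStar β n (sWord β n ξ) x =
        Set.indicator (Set.Icc (0 : ℝ) (betaSeq β n)) ξ x := by
  have hb : 0 < β := lt_trans one_pos hβ
  clear hn
  induction n generalizing ξ with
  | zero =>
    have h0 : betaSeq β 0 = 1 := by simp [betaSeq]
    filter_upwards [ae_restrict_mem measurableSet_Icc] with x hx
    rw [h0]
    simp only [sWordStar, sWord]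
    rw [Set.indicator_of_mem hx]
  | succ n ih =>
    set j := xiNat β n with hjdef
    have hjle : j ≤ ⌈β⌉₊ - 1 := xiNat_le hβ n
    have hN : 1 < ⌈β⌉₊ := ceil_two_le hβ
    have hB := betaSeq_mem_Ioc hβ n
    have hB' := betaSeq_mem_Ioc hβ (n + 1)
    have hrec : betaSeq β (n + 1) = β * betaSeq β n - (j:ℝ) := by
      rw [betaSeq_succ, xiNat_cast hβ]
    have hpull := ae_comp_gBranch hβ j hjle (ih (sOp β j ξ))
    have hT : ∀ᵐ x ∂(volume.restrict (Set.Icc (0:ℝ) 1)), x ≠ betaSeq β (n + 1) := by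
      refine Filter.Eventually.filter_mono (ae_mono Measure.restrict_le_self) ?_
      have hv : volume ({betaSeq β (n+1)} : Set ℝ) = 0 := Real.volume_singleton
      exact (measure_eq_zero_iff_ae_notMem.mp hv).mono fun x hx => by simpa using hx
    have hsne : ((Real.sqrt β : ℂ)) ≠ 0 :=
      Complex.ofReal_ne_zero.mpr (Real.sqrt_ne_zero'.mpr hb)
    filter_upwards [ae_restrict_mem measurableSet_Icc, hpull, hT] with x hx01 hgx hxT
    simp only [sWordStar, sWord]
    by_cases hxd : x ∈ sDom β j
    · have hPg := hgx hxd
      simp only [sStarOp, if_pos (show x ∈ sDom β (xiNat β n) from hxd)]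
      rw [hPg]
      by_cases hxB : x ≤ betaSeq β (n + 1)
      · have hxB' : x < betaSeq β (n + 1) := lt_of_le_of_ne hxB hxT
        have hx1 : x < 1 := lt_of_lt_of_le hxB' hB'.2
        have hg0 : 0 ≤ gBranch β j x :=
          div_nonneg (by linarith [hx01.1, @Nat.cast_nonneg ℝ _ _ _ j]) hb.le
        have hgB : gBranch β j x ≤ betaSeq β n := by
          rw [gBranch, div_le_iff₀ hb]
          have hc := mul_comm (betaSeq β n) β
          linarith
        rw [Set.indicator_of_mem (Set.mem_Icc.mpr ⟨hg0, hgB⟩)]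
        have hββ : β * betaSeq β n ≤ β := by nlinarith [hB.2]
        have hrange : gBranch β j x ∈ sRange β j := by
          simp only [sRange, Set.mem_Ico, gBranch, lt_min_iff]
          refine ⟨(div_le_div_iff_of_pos_right hb).mpr (by linarith [hx01.1]),
            (div_lt_div_iff_of_pos_right hb).mpr (by linarith), (div_lt_one hb).mpr (by linarith)⟩
        simp only [sOp, if_pos hrange]
        have hfg : betaMap β (gBranch β j x) = x := by
          simp only [betaMap, gBranch]
          rw [mul_div_cancel₀ _ hb.ne']
          have hfl : ⌊x + (j:ℝ)⌋ = (j:ℤ) := by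
            rw [Int.floor_add_natCast, Int.floor_eq_zero_iff.mpr ⟨hx01.1, hx1⟩, zero_add]
          rw [hfl]
          push_cast
          ring
        rw [hfg, ← mul_assoc, inv_mul_cancel₀ hsne, one_mul,
          Set.indicator_of_mem (Set.mem_Icc.mpr ⟨hx01.1, hxB⟩)]
      · have hxB' : betaSeq β (n + 1) < x := not_le.mp hxB
        have hgnot : gBranch β j x ∉ Set.Icc 0 (betaSeq β n) := by
          intro hmem
          have h2 := hmem.2
          rw [gBranch, div_le_iff₀ hb] at h2
          have hc := mul_comm (betaSeq β n) β
          linarith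
        rw [Set.indicator_of_notMem hgnot, mul_zero,
          Set.indicator_of_notMem (fun h => absurd h.2 (not_le.mpr hxB'))]
    · simp only [sStarOp, if_neg (show x ∉ sDom β (xiNat β n) from hxd)]
      have hnot : x ∉ Set.Icc (0:ℝ) (betaSeq β (n + 1)) := by
        intro hmem
        apply hxd
        simp only [sDom]
        split_ifs with hc
        · have hcast : (j:ℝ) = (⌈β⌉₊:ℝ) - 1 := by
            rw [hc, Nat.cast_sub (by omega : 1 ≤ ⌈β⌉₊), Nat.cast_one]
          have h5 : β * betaSeq β n ≤ β * 1 := mul_le_mul_of_nonneg_left hB.2 hb.le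
          refine ⟨hx01.1, ?_⟩
          simp only [betaOne]
          rw [← hcast]
          linarith [hmem.2]
        · exact hx01
      rw [Set.indicator_of_notMem hnot]
end

section
/- Let β > 1 with ultimately periodic β-expansion of 1: d(1,β) = ξ_1···ξ_l (ξ_{l+1}···ξ_{k+1})^∞ for some l ≤ k. Then β satisfies the monic integer polynomial equation β^{k+1} - ξ_1β^k - ··· - ξ_{k+1} = β^l - ξ_1β^{l-1} - ··· - ξ_l; in particular β is an algebraic integer of degree at most k+1. -/
/-- The `(n+1)`-st digit `ξ_{n+1} = ⌊β · f_β^n(1)⌋` of the β-expansion of `1`. -/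
noncomputable def betaDigit (β x : ℝ) (n : ℕ) : ℤ := ⌊β * (betaMap β)^[n] x⌋

lemma betaMap_mem (β x : ℝ) : betaMap β x ∈ Set.Ico (0:ℝ) 1 := by
  have : betaMap β x = Int.fract (β * x) := rfl
  rw [this]
  exact ⟨Int.fract_nonneg _, Int.fract_lt_one _⟩

lemma iter_eq (β : ℝ) (n : ℕ) :
    (betaMap β)^[n] 1 = β ^ n - ∑ j ∈ Finset.range n, (betaDigit β 1 j : ℝ) * β ^ (n - 1 - j) := by
  induction n with
  | zero => simp
  | succ n ih =>
    rw [Function.iterate_succ_apply', betaMap, ih]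
    have hd : (⌊β * (betaMap β)^[n] 1⌋ : ℝ) = (betaDigit β 1 n : ℝ) := by
      rw [betaDigit, ih]
    rw [ih] at hd
    rw [hd]
    rw [Finset.sum_range_succ]
    have hexp : ∀ j ∈ Finset.range n, β * ((betaDigit β 1 j : ℝ) * β ^ (n - 1 - j))
        = (betaDigit β 1 j : ℝ) * β ^ (n + 1 - 1 - j) := by
      intro j hj
      simp only [Finset.mem_range] at hj
      have : n + 1 - 1 - j = (n - 1 - j) + 1 := by omega
      rw [this, pow_succ]; ring
    rw [mul_sub, Finset.mul_sum, Finset.sum_congr rfl hexp]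
    simp [pow_succ]
    ring

/-- if the β-expansion of `1` is ultimately periodic,
`d(1,β) = ξ_1⋯ξ_l (ξ_{l+1}⋯ξ_{k+1})^∞` with `l ≤ k` (i.e. `ξ_{n+(k+1-l)} = ξ_n` for
`n > l`), then `β^{k+1} - ξ_1β^k - ⋯ - ξ_{k+1} = β^l - ξ_1β^{l-1} - ⋯ - ξ_l`;
in particular `β` is an algebraic integer (of degree at most `k+1`). -/
theorem periodic_expansion_algebraic_integer (β : ℝ) (hβ : 1 < β) (l k : ℕ)
    (hlk : l ≤ k)
    (hper : ∀ n : ℕ, l ≤ n → betaDigit β 1 (n + (k + 1 - l)) = betaDigit β 1 n) :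
    β ^ (k + 1) - ∑ j ∈ Finset.range (k + 1), (betaDigit β 1 j : ℝ) * β ^ (k - j) =
        β ^ l - ∑ j ∈ Finset.range l, (betaDigit β 1 j : ℝ) * β ^ (l - 1 - j) ∧
      IsIntegral ℤ β := by
  set p := k + 1 - l with hp
  -- orbit difference
  have key : ∀ n, l ≤ n → (betaMap β)^[n + p] 1 - (betaMap β)^[n] 1
      = β ^ (n - l) * ((betaMap β)^[l + p] 1 - (betaMap β)^[l] 1) := by
    intro n hn
    induction n with
    | zero => simp_all
    | succ n ih =>
      rcases Nat.lt_or_ge l (n+1) with h | h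
      · have hln : l ≤ n := by omega
        have ihn := ih hln
        have e1 : (n + 1 + p) = (n + p) + 1 := by omega
        rw [e1, Function.iterate_succ_apply', Function.iterate_succ_apply', betaMap, betaMap]
        have hd : ⌊β * (betaMap β)^[n + p] 1⌋ = ⌊β * (betaMap β)^[n] 1⌋ := hper n hln
        rw [hd]
        have : n + 1 - l = (n - l) + 1 := by omega
        rw [this, pow_succ]
        rw [sub_sub_sub_cancel_right]
        nlinarith [ihn]
      · have : l = n + 1 := by omega
        subst this; simp
  have hdiff0 : (betaMap β)^[l + p] 1 = (betaMap β)^[l] 1 := by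
    by_contra hne
    set d := (betaMap β)^[l + p] 1 - (betaMap β)^[l] 1 with hd
    have hdne : d ≠ 0 := sub_ne_zero.mpr hne
    have hbound : ∀ n, l ≤ n → β ^ (n - l) * |d| ≤ 1 := by
      intro n hn
      have h1 : ∀ m : ℕ, (betaMap β)^[m] 1 ∈ Set.Icc (0:ℝ) 1 := by
        intro m
        cases m with
        | zero => simp
        | succ m =>
          rw [Function.iterate_succ_apply']
          have := betaMap_mem β ((betaMap β)^[m] 1)
          exact ⟨this.1, this.2.le⟩
      have h2 := key n hn
      have ha := h1 (n + p); have hb := h1 n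
      have : |(betaMap β)^[n + p] 1 - (betaMap β)^[n] 1| ≤ 1 := by
        rw [abs_sub_le_iff]
        constructor <;> [linarith [ha.2, hb.1]; linarith [hb.2, ha.1]]
      rw [h2, abs_mul, abs_of_nonneg (by positivity : (0:ℝ) ≤ β ^ (n - l))] at this
      exact this
    obtain ⟨n, hn⟩ := pow_unbounded_of_one_lt (1 / |d|) hβ
    have := hbound (n + l) (by omega)
    have hdpos : 0 < |d| := abs_pos.mpr hdne
    rw [Nat.add_sub_cancel] at this
    rw [div_lt_iff₀ hdpos] at hn
    nlinarith
  have hk1 : l + p = k + 1 := by omega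
  rw [hk1] at hdiff0
  have main : β ^ (k + 1) - ∑ j ∈ Finset.range (k + 1), (betaDigit β 1 j : ℝ) * β ^ (k - j) =
      β ^ l - ∑ j ∈ Finset.range l, (betaDigit β 1 j : ℝ) * β ^ (l - 1 - j) := by
    have e1 := iter_eq β (k + 1)
    have e2 := iter_eq β l
    have : k + 1 - 1 = k := by omega
    rw [this] at e1
    rw [← e1, ← e2, hdiff0]
  refine ⟨main, ?_⟩
  -- integrality
  open Polynomial in
  refine ⟨X ^ (k + 1) + ((∑ j ∈ Finset.range l, C (betaDigit β 1 j) * X ^ (l - 1 - j))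
      - X ^ l - ∑ j ∈ Finset.range (k + 1), C (betaDigit β 1 j) * X ^ (k - j)), ?_, ?_⟩
  · apply monic_X_pow_add
    have h1 : (∑ j ∈ Finset.range l, C (betaDigit β 1 j) * X ^ (l - 1 - j) : ℤ[X]).degree ≤ k := by
      apply le_trans (degree_sum_le _ _)
      apply Finset.sup_le
      intro j hj
      exact le_trans (degree_C_mul_X_pow_le _ _)
        (Nat.cast_le.mpr (le_trans (Nat.sub_le _ _) (le_trans (Nat.sub_le _ _) hlk)))
    have h2 : (X ^ l : ℤ[X]).degree ≤ k :=
      le_trans (degree_X_pow_le _) (by exact_mod_cast Nat.cast_le.mpr hlk)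
    have h3 : (∑ j ∈ Finset.range (k+1), C (betaDigit β 1 j) * X ^ (k - j) : ℤ[X]).degree ≤ k := by
      apply le_trans (degree_sum_le _ _)
      apply Finset.sup_le
      intro j hj
      exact le_trans (degree_C_mul_X_pow_le _ _) (Nat.cast_le.mpr (Nat.sub_le _ _))
    refine lt_of_le_of_lt (le_trans (degree_sub_le _ _) (max_le (le_trans (degree_sub_le _ _) (max_le h1 h2)) h3)) ?_
    exact_mod_cast Nat.lt_succ_self k
  · simp only [Polynomial.eval₂_add, Polynomial.eval₂_sub, Polynomial.eval₂_X_pow,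
      Polynomial.eval₂_finset_sum, Polynomial.eval₂_mul, Polynomial.eval₂_C,
      algebraMap_int_eq]
    simp only [eq_intCast]
    linarith [main]
end
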